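/- Let X* ∈ F. Then X* satisfies the first-order optimality condition ⟨∇f(X*) | X − X*⟩ ≥ 0 for every X ∈ F if and only if ‖D(X*)‖_F = 0, i.e. D(X*) = O. -/

import Mathlib

set_option autoImplicit false

open Matrix Set Filter

attribute [local instance] Matrix.normedAddCommGroup Matrix.normedSpace

namespace BoxSDP

open scoped Classical

/-- Trace inner product `⟨A|B⟩ = Trace(Aᵀ B)`. -/
noncomputable def mip {m k : Type*} [Fintype m] [Fintype k]
    (A B : Matrix m k ℝ) : ℝ :=
  (Aᵀ * B).trace

/-- Frobenius norm `‖A‖_F = √⟨A|A⟩`. -/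
noncomputable def fnorm {m k : Type*} [Fintype m] [Fintype k]
    (A : Matrix m k ℝ) : ℝ :=
  Real.sqrt (mip A A)

/-- The feasible set `F = {X : O ⪯ X ⪯ I}` (membership forces symmetry). -/
def Feas (n : ℕ) : Set (Matrix (Fin n) (Fin n) ℝ) :=
  {X | X.PosSemidef ∧ (1 - X).PosSemidef}

/-- Square root of a positive semidefinite matrix (junk value `0` otherwise);
agrees with `A^{1/2} = Q K^{1/2} Qᵀ` on positive semidefinite matrices. -/
noncomputable def psqrt {m : Type*} [Fintype m] [DecidableEq m]
    (A : Matrix m m ℝ) : Matrix m m ℝ :=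
  if h : A.PosSemidef then
    (h.1.eigenvectorUnitary : Matrix m m ℝ) *
      Matrix.diagonal ((↑) ∘ (√·) ∘ h.1.eigenvalues) *
      (star h.1.eigenvectorUnitary : Matrix m m ℝ)
  else 0

/-- Fourth root `A^{1/4}` of a positive semidefinite matrix. -/
noncomputable def proot4 {m : Type*} [Fintype m] [DecidableEq m]
    (A : Matrix m m ℝ) : Matrix m m ℝ :=
  psqrt (psqrt A)

/-- The 2-norm of a symmetric matrix: its largest absolute eigenvalue. -/
noncomputable def norm2 {m : Type*} [Fintype m] [DecidableEq m]
    (A : Matrix m m ℝ) : ℝ :=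
  if h : A.IsHermitian then sSup (Set.range fun i => |h.eigenvalues i|) else 0

/-- The linear functional `H ↦ ⟨G|H⟩`, as a continuous linear map; a function
`f` has gradient matrix `G` at `X` iff `HasFDerivAt f (gradCLM G) X`. -/
noncomputable def gradCLM {n : ℕ} (G : Matrix (Fin n) (Fin n) ℝ) :
    Matrix (Fin n) (Fin n) ℝ →L[ℝ] ℝ :=
  LinearMap.toContinuousLinearMap
    { toFun := fun H => mip G H
      map_add' := fun x y => by
        simp [mip, Matrix.mul_add]
      map_smul' := fun c x => by
        simp [mip, Matrix.mul_smul] }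

/-- The Hessian bilinear form `⟨A | ∇²f(X) | B⟩` induced by the derivative
`hessOp` of the gradient map. -/
noncomputable def hform {n : ℕ}
    (hessOp : Matrix (Fin n) (Fin n) ℝ →L[ℝ] Matrix (Fin n) (Fin n) ℝ)
    (A B : Matrix (Fin n) (Fin n) ℝ) : ℝ :=
  mip A (hessOp B)

/-- `underline-f`: the minimum of `⟨G | Y − X̂⟩` over `Y ∈ F`. -/
noncomputable def underf {n : ℕ} (G Xh : Matrix (Fin n) (Fin n) ℝ) : ℝ :=
  sInf ((fun Y => mip G (Y - Xh)) '' Feas n)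

/-- First-order optimality condition at `Xs` for gradient matrix `G`. -/
def FirstOrderOpt {n : ℕ} (G Xs : Matrix (Fin n) (Fin n) ℝ) : Prop :=
  ∀ X ∈ Feas n, 0 ≤ mip G (X - Xs)

/-- A fixed eigenvalue decomposition `G = P Γ Pᵀ` of a symmetric matrix `G`,
with eigenvalues in descending order, split into the block `Pp, gp` of
positive eigenvalues and the block `Pm, gm` of nonpositive eigenvalues. -/
structure SpecDecomp (n : ℕ) (G : Matrix (Fin n) (Fin n) ℝ) where
  np : ℕ
  nm : ℕ
  hdim : np + nm = n
  Pp : Matrix (Fin n) (Fin np) ℝ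
  Pm : Matrix (Fin n) (Fin nm) ℝ
  gp : Fin np → ℝ
  gm : Fin nm → ℝ
  hgp_pos : ∀ i, 0 < gp i
  hgm_nonpos : ∀ j, gm j ≤ 0
  hgp_anti : ∀ i j : Fin np, i ≤ j → gp j ≤ gp i
  hgm_anti : ∀ i j : Fin nm, i ≤ j → gm j ≤ gm i
  hPp_orth : Ppᵀ * Pp = 1
  hPm_orth : Pmᵀ * Pm = 1
  hPpPm : Ppᵀ * Pm = 0
  hPPT : Pp * Ppᵀ + Pm * Pmᵀ = 1
  hG : G = Pp * Matrix.diagonal gp * Ppᵀ + Pm * Matrix.diagonal gm * Pmᵀ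

namespace SpecDecomp

variable {n : ℕ} {G : Matrix (Fin n) (Fin n) ℝ}

/-- `V₊(X) = P₊ᵀ X P₊`. -/
def Vp (sd : SpecDecomp n G) (X : Matrix (Fin n) (Fin n) ℝ) :
    Matrix (Fin sd.np) (Fin sd.np) ℝ :=
  sd.Ppᵀ * X * sd.Pp

/-- `V₋(X) = P₋ᵀ (I − X) P₋`. -/
def Vm (sd : SpecDecomp n G) (X : Matrix (Fin n) (Fin n) ℝ) :
    Matrix (Fin sd.nm) (Fin sd.nm) ℝ :=
  sd.Pmᵀ * (1 - X) * sd.Pm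

/-- The search direction `D(X) = P M Pᵀ` with blocks
`M₁₁ = V₊^{1/2} Γ₊ V₊^{1/2}`, `M₁₂ = γ_max P₊ᵀ X P₋`,
`M₂₁ = γ_max P₋ᵀ X P₊`, `M₂₂ = V₋^{1/2} Γ₋ V₋^{1/2}`. -/
noncomputable def Dmat (sd : SpecDecomp n G) (X : Matrix (Fin n) (Fin n) ℝ) :
    Matrix (Fin n) (Fin n) ℝ :=
  sd.Pp * (psqrt (sd.Vp X) * Matrix.diagonal sd.gp * psqrt (sd.Vp X)) * sd.Ppᵀ
    + norm2 G • (sd.Pp * (sd.Ppᵀ * X * sd.Pm) * sd.Pmᵀ)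
    + norm2 G • (sd.Pm * (sd.Pmᵀ * X * sd.Pp) * sd.Ppᵀ)
    + sd.Pm * (psqrt (sd.Vm X) * Matrix.diagonal sd.gm * psqrt (sd.Vm X)) * sd.Pmᵀ

/-- `N(X) = ⟨G | D(X)⟩`. -/
noncomputable def Nval (sd : SpecDecomp n G) (X : Matrix (Fin n) (Fin n) ℝ) : ℝ :=
  mip G (sd.Dmat X)

end SpecDecomp

/-!
In the eigenbasis of `G = ∇f(X*)` one has
`⟨G|X⟩ = tr(Γ₊ V₊(X)) + tr((−Γ₋) V₋(X)) + tr Γ₋`, and on `F` both traces are traces of products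
of positive semidefinite matrices, hence nonnegative; at `X = P₋P₋ᵀ` both vanish. So `X*` is
first-order optimal iff both traces vanish at `X*`. Since `tr(ΓV) = tr(V^{1/2} Γ V^{1/2})`, they
vanish iff the diagonal blocks `M₁₁`, `M₂₂` of `D(X*)` do. Moreover `tr(Γ₊V₊) = 0` with `Γ₊ ≻ 0`
forces `V₊ = 0`, i.e. `X* P₊ = 0`, which kills the off-diagonal blocks.
-/

section PsdFacts

variable {m : Type*} [Fintype m] [DecidableEq m]

lemma psqrt_posSemidef {A : Matrix m m ℝ} (hA : A.PosSemidef) : (psqrt A).PosSemidef := by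
  rw [psqrt, dif_pos hA]
  have hd : (Matrix.diagonal ((↑) ∘ (√·) ∘ hA.1.eigenvalues : m → ℝ)).PosSemidef :=
    posSemidef_diagonal_iff.mpr fun i => by simp [Real.sqrt_nonneg]
  simpa [Unitary.coe_star, Matrix.star_eq_conjTranspose] using
    hd.mul_mul_conjTranspose_same (hA.1.eigenvectorUnitary : Matrix m m ℝ)

lemma psqrt_mul_self {A : Matrix m m ℝ} (hA : A.PosSemidef) : psqrt A * psqrt A = A := by
  set U : Matrix m m ℝ := (hA.1.eigenvectorUnitary : Matrix m m ℝ)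
  set S : Matrix m m ℝ := Matrix.diagonal ((↑) ∘ (√·) ∘ hA.1.eigenvalues)
  have hU : star U * U = 1 := Unitary.coe_star_mul_self _
  have hSS : S * S = Matrix.diagonal ((↑) ∘ hA.1.eigenvalues) := by
    rw [Matrix.diagonal_mul_diagonal]
    congr 1
    funext i
    simp [Real.mul_self_sqrt (hA.eigenvalues_nonneg i)]
  rw [psqrt, dif_pos hA]
  conv_rhs => rw [hA.1.spectral_theorem, Unitary.conjStarAlgAut_apply]
  calc U * S * star U * (U * S * star U) = U * (S * (star U * U) * S) * star U := by
        simp only [Matrix.mul_assoc]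
    _ = _ := by rw [hU, Matrix.mul_one, hSS]; rfl

lemma trace_mul_eq_trace_psqrt_mul_mul_psqrt {N C : Matrix m m ℝ} (hC : C.PosSemidef) :
    (N * C).trace = (psqrt C * N * psqrt C).trace := by
  rw [Matrix.trace_mul_cycle, psqrt_mul_self hC, Matrix.trace_mul_comm]

lemma posSemidef_psqrt_mul_mul_psqrt {N C : Matrix m m ℝ} (hN : N.PosSemidef)
    (hC : C.PosSemidef) : (psqrt C * N * psqrt C).PosSemidef := by
  have hS : (psqrt C)ᵀ = psqrt C := (psqrt_posSemidef hC).isHermitian.eq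
  simpa [hS] using hN.mul_mul_conjTranspose_same (psqrt C)

lemma trace_mul_nonneg_of_posSemidef {N C : Matrix m m ℝ} (hN : N.PosSemidef)
    (hC : C.PosSemidef) : 0 ≤ (N * C).trace := by
  rw [trace_mul_eq_trace_psqrt_mul_mul_psqrt hC]
  exact (posSemidef_psqrt_mul_mul_psqrt hN hC).trace_nonneg

lemma psqrt_mul_mul_psqrt_eq_zero_iff {N C : Matrix m m ℝ} (hN : N.PosSemidef)
    (hC : C.PosSemidef) : psqrt C * N * psqrt C = 0 ↔ (N * C).trace = 0 := by
  rw [trace_mul_eq_trace_psqrt_mul_mul_psqrt hC,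
    (posSemidef_psqrt_mul_mul_psqrt hN hC).trace_eq_zero_iff]

lemma eq_zero_of_trace_diagonal_mul_eq_zero {d : m → ℝ} (hd : ∀ i, 0 < d i)
    {V : Matrix m m ℝ} (hV : V.PosSemidef) (h : (Matrix.diagonal d * V).trace = 0) : V = 0 := by
  have hterms : ∀ i, d i * V i i = 0 := by
    simp only [Matrix.trace, Matrix.diag, Matrix.diagonal_mul] at h
    exact fun i => (Finset.sum_eq_zero_iff_of_nonneg fun i _ =>
      mul_nonneg (hd i).le hV.diag_nonneg).mp h i (Finset.mem_univ i)
  rw [← hV.trace_eq_zero_iff]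
  exact Finset.sum_eq_zero fun i _ => (mul_eq_zero.mp (hterms i)).resolve_left (hd i).ne'

lemma mul_eq_zero_of_transpose_mul_mul_eq_zero {k : Type*} [Fintype k] {X : Matrix m m ℝ}
    (hX : X.PosSemidef) {P : Matrix m k ℝ} (h : Pᵀ * X * P = 0) : X * P = 0 := by
  set S := psqrt X
  have hS : Sᵀ = S := (psqrt_posSemidef hX).isHermitian.eq
  have hSP : (S * P)ᴴ * (S * P) = 0 := by
    rw [← psqrt_mul_self hX] at h
    simpa [Matrix.conjTranspose_mul, hS, Matrix.mul_assoc] using h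
  rw [← psqrt_mul_self hX, Matrix.mul_assoc, conjTranspose_mul_self_eq_zero.mp hSP,
    Matrix.mul_zero]

end PsdFacts

lemma mip_sub {m k : Type*} [Fintype m] [Fintype k] (A B C : Matrix m k ℝ) :
    mip A (B - C) = mip A B - mip A C := by
  simp only [mip, Matrix.mul_sub, Matrix.trace_sub]

namespace SpecDecomp

variable {n : ℕ} {G : Matrix (Fin n) (Fin n) ℝ} (sd : SpecDecomp n G)

lemma transpose_Pp_mul_Pp_mul {k : Type*} (A : Matrix (Fin sd.np) k ℝ) :
    sd.Ppᵀ * (sd.Pp * A) = A := by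
  rw [← Matrix.mul_assoc, sd.hPp_orth, Matrix.one_mul]

lemma transpose_Pm_mul_Pm_mul {k : Type*} (A : Matrix (Fin sd.nm) k ℝ) :
    sd.Pmᵀ * (sd.Pm * A) = A := by
  rw [← Matrix.mul_assoc, sd.hPm_orth, Matrix.one_mul]

lemma transpose_Pp_mul_Pm_mul {k : Type*} (A : Matrix (Fin sd.nm) k ℝ) :
    sd.Ppᵀ * (sd.Pm * A) = 0 := by
  rw [← Matrix.mul_assoc, sd.hPpPm, Matrix.zero_mul]

lemma transpose_Pm_mul_Pp : sd.Pmᵀ * sd.Pp = 0 := by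
  simpa [Matrix.transpose_mul] using congrArg Matrix.transpose sd.hPpPm

lemma transpose_Pm_mul_Pp_mul {k : Type*} (A : Matrix (Fin sd.np) k ℝ) :
    sd.Pmᵀ * (sd.Pp * A) = 0 := by
  rw [← Matrix.mul_assoc, sd.transpose_Pm_mul_Pp, Matrix.zero_mul]

lemma isSymm (sd : SpecDecomp n G) : G.IsSymm := by
  rw [Matrix.IsSymm, sd.hG]
  simp [Matrix.transpose_mul, Matrix.mul_assoc]

lemma Vp_posSemidef {X : Matrix (Fin n) (Fin n) ℝ} (hX : X.PosSemidef) :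
    (sd.Vp X).PosSemidef := by
  simpa [Vp] using hX.conjTranspose_mul_mul_same sd.Pp

lemma Vm_posSemidef {X : Matrix (Fin n) (Fin n) ℝ} (hX : (1 - X).PosSemidef) :
    (sd.Vm X).PosSemidef := by
  simpa [Vm] using hX.conjTranspose_mul_mul_same sd.Pm

lemma posSemidef_diagonal_gp : (Matrix.diagonal sd.gp).PosSemidef :=
  posSemidef_diagonal_iff.mpr fun i => (sd.hgp_pos i).le

lemma posSemidef_diagonal_neg_gm : (Matrix.diagonal (-sd.gm)).PosSemidef :=
  posSemidef_diagonal_iff.mpr fun j => neg_nonneg.mpr (sd.hgm_nonpos j)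

lemma diagonal_neg_gm : Matrix.diagonal (-sd.gm) = -Matrix.diagonal sd.gm :=
  (Matrix.diagonal_neg _).symm

lemma mip_eq_traces (X : Matrix (Fin n) (Fin n) ℝ) :
    mip G X = (Matrix.diagonal sd.gp * sd.Vp X).trace
      + (Matrix.diagonal (-sd.gm) * sd.Vm X).trace + (Matrix.diagonal sd.gm).trace := by
  have hPmXPm : sd.Pmᵀ * X * sd.Pm = 1 - sd.Vm X := by
    rw [Vm, Matrix.mul_sub, Matrix.sub_mul, Matrix.mul_one, sd.hPm_orth, sub_sub_cancel]
  rw [mip, sd.isSymm.eq]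
  conv_lhs => rw [sd.hG]
  rw [Matrix.add_mul, Matrix.trace_add, Matrix.mul_assoc, Matrix.trace_mul_cycle,
    Matrix.mul_assoc (sd.Pm * _), Matrix.trace_mul_cycle sd.Pm,
    Matrix.trace_mul_comm _ (Matrix.diagonal sd.gp),
    Matrix.trace_mul_comm _ (Matrix.diagonal sd.gm),
    hPmXPm, diagonal_neg_gm, Matrix.neg_mul, Matrix.trace_neg, Matrix.mul_sub,
    Matrix.mul_one, Matrix.trace_sub, Vp]
  ring

lemma trace_diagonal_gm_le_mip {X : Matrix (Fin n) (Fin n) ℝ} (hX : X ∈ Feas n) :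
    (Matrix.diagonal sd.gm).trace ≤ mip G X := by
  have hpos := trace_mul_nonneg_of_posSemidef sd.posSemidef_diagonal_gp (sd.Vp_posSemidef hX.1)
  have hneg := trace_mul_nonneg_of_posSemidef sd.posSemidef_diagonal_neg_gm
    (sd.Vm_posSemidef hX.2)
  linarith [sd.mip_eq_traces X]

lemma Pm_mul_transpose_mem_Feas : sd.Pm * sd.Pmᵀ ∈ Feas n := by
  have hcompl : 1 - sd.Pm * sd.Pmᵀ = sd.Pp * sd.Ppᵀ := by
    rw [← sd.hPPT, add_sub_cancel_right]
  refine ⟨?_, ?_⟩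
  · simpa using posSemidef_self_mul_conjTranspose sd.Pm
  · simpa [hcompl] using posSemidef_self_mul_conjTranspose sd.Pp

lemma mip_Pm_mul_transpose : mip G (sd.Pm * sd.Pmᵀ) = (Matrix.diagonal sd.gm).trace := by
  have hVp : sd.Vp (sd.Pm * sd.Pmᵀ) = 0 := by
    rw [Vp, sd.transpose_Pp_mul_Pm_mul, Matrix.zero_mul]
  have hVm : sd.Vm (sd.Pm * sd.Pmᵀ) = 0 := by
    rw [Vm, ← sd.hPPT, add_sub_cancel_right, ← Matrix.mul_assoc, sd.transpose_Pm_mul_Pp,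
      Matrix.zero_mul, Matrix.zero_mul]
  simp [sd.mip_eq_traces, hVp, hVm]

lemma firstOrderOpt_iff {X : Matrix (Fin n) (Fin n) ℝ} (hX : X ∈ Feas n) :
    FirstOrderOpt G X ↔ (Matrix.diagonal sd.gp * sd.Vp X).trace = 0
      ∧ (Matrix.diagonal (-sd.gm) * sd.Vm X).trace = 0 := by
  have hpos := trace_mul_nonneg_of_posSemidef sd.posSemidef_diagonal_gp (sd.Vp_posSemidef hX.1)
  have hneg := trace_mul_nonneg_of_posSemidef sd.posSemidef_diagonal_neg_gm
    (sd.Vm_posSemidef hX.2)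
  have hX_eq := sd.mip_eq_traces X
  constructor
  · intro hopt
    have hmin := hopt _ sd.Pm_mul_transpose_mem_Feas
    rw [mip_sub, sd.mip_Pm_mul_transpose] at hmin
    constructor <;> linarith
  · rintro ⟨hpos₀, hneg₀⟩ Y hY
    rw [mip_sub]
    linarith [sd.trace_diagonal_gm_le_mip hY]

lemma transpose_Pp_mul_Dmat_mul_Pp (X : Matrix (Fin n) (Fin n) ℝ) :
    sd.Ppᵀ * sd.Dmat X * sd.Pp = psqrt (sd.Vp X) * Matrix.diagonal sd.gp * psqrt (sd.Vp X) := by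
  simp only [Dmat, Matrix.mul_add, Matrix.add_mul, Matrix.mul_smul, Matrix.smul_mul,
    Matrix.mul_assoc, transpose_Pp_mul_Pp_mul, transpose_Pp_mul_Pm_mul, sd.hPp_orth,
    sd.transpose_Pm_mul_Pp, Matrix.mul_zero, Matrix.mul_one, smul_zero, add_zero]

lemma transpose_Pm_mul_Dmat_mul_Pm (X : Matrix (Fin n) (Fin n) ℝ) :
    sd.Pmᵀ * sd.Dmat X * sd.Pm = psqrt (sd.Vm X) * Matrix.diagonal sd.gm * psqrt (sd.Vm X) := by
  simp only [Dmat, Matrix.mul_add, Matrix.add_mul, Matrix.mul_smul, Matrix.smul_mul,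
    Matrix.mul_assoc, transpose_Pm_mul_Pm_mul, transpose_Pm_mul_Pp_mul, sd.hPm_orth,
    sd.hPpPm, Matrix.mul_zero, Matrix.mul_one, smul_zero, zero_add]

lemma Dmat_eq_zero_iff {X : Matrix (Fin n) (Fin n) ℝ} (hX : X ∈ Feas n) :
    sd.Dmat X = 0 ↔ (Matrix.diagonal sd.gp * sd.Vp X).trace = 0
      ∧ (Matrix.diagonal (-sd.gm) * sd.Vm X).trace = 0 := by
  have hM₁₁ :=
    psqrt_mul_mul_psqrt_eq_zero_iff sd.posSemidef_diagonal_gp (sd.Vp_posSemidef hX.1)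
  have hM₂₂ : psqrt (sd.Vm X) * Matrix.diagonal sd.gm * psqrt (sd.Vm X) = 0
      ↔ (Matrix.diagonal (-sd.gm) * sd.Vm X).trace = 0 := by
    rw [← psqrt_mul_mul_psqrt_eq_zero_iff sd.posSemidef_diagonal_neg_gm (sd.Vm_posSemidef hX.2),
      diagonal_neg_gm, Matrix.mul_neg, Matrix.neg_mul, neg_eq_zero]
  constructor
  · intro hD
    rw [← hM₁₁, ← hM₂₂, ← transpose_Pp_mul_Dmat_mul_Pp, ← transpose_Pm_mul_Dmat_mul_Pm,
      hD]
    simp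
  · rintro ⟨hpos, hneg⟩
    have hVp : sd.Vp X = 0 :=
      eq_zero_of_trace_diagonal_mul_eq_zero sd.hgp_pos (sd.Vp_posSemidef hX.1) hpos
    have hXPp : X * sd.Pp = 0 := mul_eq_zero_of_transpose_mul_mul_eq_zero hX.1 hVp
    have hPpX : sd.Ppᵀ * X = 0 := by
      have hXsymm : Xᵀ = X := hX.1.isHermitian.eq
      simpa [Matrix.transpose_mul, hXsymm] using congrArg Matrix.transpose hXPp
    rw [Dmat, hM₁₁.mpr hpos, hM₂₂.mpr hneg, hPpX, Matrix.mul_assoc sd.Pmᵀ, hXPp]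
    simp

end SpecDecomp

theorem first_order_iff_Dmat_eq_zero_general {n : ℕ}
    (grad : Matrix (Fin n) (Fin n) ℝ → Matrix (Fin n) (Fin n) ℝ)
    (Xs : Matrix (Fin n) (Fin n) ℝ) (hXs : Xs ∈ Feas n)
    (sd : SpecDecomp n (grad Xs)) :
    FirstOrderOpt (grad Xs) Xs ↔ (fnorm (sd.Dmat Xs) = 0 ∧ sd.Dmat Xs = 0) := by
  rw [sd.firstOrderOpt_iff hXs, ← sd.Dmat_eq_zero_iff hXs]
  refine ⟨fun hD => ⟨?_, hD⟩, And.right⟩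
  simp [hD, fnorm, mip]

theorem first_order_iff_Dmat_eq_zero {n : ℕ}
    (f : Matrix (Fin n) (Fin n) ℝ → ℝ)
    (grad : Matrix (Fin n) (Fin n) ℝ → Matrix (Fin n) (Fin n) ℝ)
    (hgradsym : ∀ X ∈ Feas n, (grad X).IsSymm)
    (hgrad : ∀ X ∈ Feas n, HasFDerivAt f (gradCLM (grad X)) X)
    (Xs : Matrix (Fin n) (Fin n) ℝ) (hXs : Xs ∈ Feas n)
    (sd : SpecDecomp n (grad Xs)) :
    FirstOrderOpt (grad Xs) Xs ↔ (fnorm (sd.Dmat Xs) = 0 ∧ sd.Dmat Xs = 0) :=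
  first_order_iff_Dmat_eq_zero_general grad Xs hXs sd

end BoxSDP
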